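/- arXiv:math/0602008 — 2 statements merged into one kernel-verified Lean document; each statement's English description precedes it below -/
import Mathlib

section
/- Let p > 1, α > 1 − 1/p, f ∈ C([−1,1],ℝ) and h ∈ (0,1]. Then sup_{u∈[0,1]} |T_h^f(u) − T_0^f(u)| ≤ 2^{(p−1)/p} c(α,p) · S_p(f,h,α)^{1/p} (as an inequality in [0,∞]). -/
open MeasureTheory ProbabilityTheory Filter
open scoped ENNReal NNReal

/-- The constant `c(α,p) = (∑_{n=1}^∞ n^{-αp/(p-1)})^{(p-1)/p}`. -/
noncomputable def cConst (α p : ℝ) : ℝ :=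
  (∑' n : ℕ, ((n : ℝ) + 1) ^ (-(α * p / (p - 1)))) ^ ((p - 1) / p)

/-- The dyadic sum `S_p(f,h,α)` (with `nh = n(h)`), valued in `[0,∞]`:
`∑_{n=0}^∞ (n+1)^{αp} ∑_{k=0}^{2^{n+n(h)+1}-1} |f((k+1)2^{-(n+n(h))} - 1) - f(k 2^{-(n+n(h))} - 1)|^p`. -/
noncomputable def Sp (f : ℝ → ℝ) (nh : ℕ) (α p : ℝ) : ℝ≥0∞ :=
  ∑' n : ℕ, ENNReal.ofReal (((n : ℝ) + 1) ^ (α * p)) *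
    ∑ k ∈ Finset.range (2 ^ (n + nh + 1)),
      ENNReal.ofReal (|f (((k : ℝ) + 1) / 2 ^ (n + nh) - 1) - f ((k : ℝ) / 2 ^ (n + nh) - 1)| ^ p)

/-!
Approximate `x` and `y = x + h` from below by the dyadic grid points `dyadicFloor m x`,
`dyadicFloor m y` of the levels `m ≥ n(h)`. By continuity, `|f y - f x|` is at most the gap
at level `n(h)` plus the increments of `f` along the two refining chains. At level `n(h)` the two
grid points are one or two grid steps apart, and passing from level `m` to `m + 1` moves each
point by at most one step, on distinct intervals for `x` and `y`. So the `n`-th term of the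
chain is a sum of at most two increments of level `n + n(h)`, and its `p`-th power is at most
`2^(p-1)` times the `n`-th inner sum of `S_p`. Hölder's inequality with the weights `(n+1)^(∓α)`
finishes the proof; the dual sum is `c(α,p)^(p/(p-1))`, finite because `α > 1 - 1/p`.
-/

open Finset Topology

section Telescoping

variable {E : Type*} [PseudoEMetricSpace E]

def chainIncrements (u v : ℕ → E) : ℕ → ℝ≥0∞
  | 0 => edist (u 0) (v 0)
  | n + 1 => edist (u n) (u (n + 1)) + edist (v n) (v (n + 1))

theorem edist_le_sum_chainIncrements (u v : ℕ → E) (N : ℕ) :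
    edist (u N) (v N) ≤ ∑ n ∈ range (N + 1), chainIncrements u v n := by
  induction N with
  | zero => simp [chainIncrements]
  | succ N ih =>
    rw [sum_range_succ, chainIncrements]
    calc edist (u (N + 1)) (v (N + 1))
        ≤ edist (u N) (u (N + 1)) + edist (u N) (v N) + edist (v N) (v (N + 1)) := by
          rw [edist_comm (u N)]; exact edist_triangle4 _ _ _ _
      _ ≤ _ := by rw [add_comm (edist (u N) _), add_assoc]; gcongr

theorem edist_le_tsum_chainIncrements {u v : ℕ → E} {a b : E}
    (hu : Tendsto u atTop (𝓝 a)) (hv : Tendsto v atTop (𝓝 b)) :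
    edist a b ≤ ∑' n, chainIncrements u v n :=
  le_of_tendsto' (hu.edist hv) fun N =>
    (edist_le_sum_chainIncrements u v N).trans (ENNReal.sum_le_tsum _)

end Telescoping

theorem rpow_le_mul_sum_rpow_of_le_sum {ι : Type*} {s t : Finset ι} {b : ι → ℝ≥0∞} {a : ℝ≥0∞}
    {n : ℕ} {p : ℝ} (hp : 1 ≤ p) (hst : s ⊆ t) (hs : #s ≤ n) (ha : a ≤ ∑ i ∈ s, b i) :
    a ^ p ≤ (n : ℝ≥0∞) ^ (p - 1) * ∑ i ∈ t, b i ^ p :=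
  calc a ^ p ≤ (∑ i ∈ s, b i) ^ p := ENNReal.rpow_le_rpow ha (by linarith)
    _ ≤ (#s : ℝ≥0∞) ^ (p - 1) * ∑ i ∈ s, b i ^ p :=
      ENNReal.rpow_sum_le_const_mul_sum_rpow _ _ hp
    _ ≤ (n : ℝ≥0∞) ^ (p - 1) * ∑ i ∈ t, b i ^ p := by gcongr

theorem tsum_le_ofReal_cConst_mul {p α : ℝ} (hp : 1 < p) (hα : 1 - 1 / p < α) (a : ℕ → ℝ≥0∞) :
    ∑' n, a n ≤ ENNReal.ofReal (cConst α p) *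
      (∑' n : ℕ, ENNReal.ofReal (((n : ℝ) + 1) ^ (α * p)) * a n ^ p) ^ (1 / p) := by
  set q := p / (p - 1)
  have hpq : p.HolderConjugate q := .conjExponent hp
  have hn : ∀ n : ℕ, (0 : ℝ) < n + 1 := fun n => by positivity
  set w : ℕ → ℝ≥0∞ := fun n => ENNReal.ofReal (((n : ℝ) + 1) ^ α)
  have hw : ∀ n : ℕ, ENNReal.ofReal (((n : ℝ) + 1) ^ (-α)) * w n = 1 := fun n => by
    rw [← ENNReal.ofReal_mul (by positivity), ← Real.rpow_add (hn n)]; simp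
  have hsum : Summable fun n : ℕ => ((n : ℝ) + 1) ^ (-(α * p / (p - 1))) := by
    have hexp : 1 < α * p / (p - 1) := by
      rw [lt_div_iff₀ (by linarith)]
      have : (1 - 1 / p) * p = p - 1 := by field_simp
      nlinarith
    simpa using (summable_nat_add_iff 1).mpr
      (Real.summable_nat_rpow.mpr (by linarith : -(α * p / (p - 1)) < -1))
  have hdual : (∑' n : ℕ, ENNReal.ofReal (((n : ℝ) + 1) ^ (-α)) ^ q) ^ (1 / q)
      = ENNReal.ofReal (cConst α p) := by
    have hterm : ∀ n : ℕ, ENNReal.ofReal (((n : ℝ) + 1) ^ (-α)) ^ q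
        = ENNReal.ofReal (((n : ℝ) + 1) ^ (-(α * p / (p - 1)))) := fun n => by
      rw [ENNReal.ofReal_rpow_of_nonneg (by positivity) hpq.symm.nonneg,
        ← Real.rpow_mul (hn n).le, neg_mul, mul_div_assoc]
    rw [tsum_congr hterm, ← ENNReal.ofReal_tsum_of_nonneg (fun n => by positivity) hsum,
      ENNReal.ofReal_rpow_of_nonneg (tsum_nonneg fun n => by positivity) (by positivity), cConst,
      one_div_div]
  have hprimal : ∀ n : ℕ,
      (w n * a n) ^ p = ENNReal.ofReal (((n : ℝ) + 1) ^ (α * p)) * a n ^ p := fun n => by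
    rw [ENNReal.mul_rpow_of_nonneg _ _ (by linarith),
      ENNReal.ofReal_rpow_of_nonneg (by positivity) (by linarith), ← Real.rpow_mul (hn n).le]
  -- Hölder for the counting measure, applied to `a n = (n + 1) ^ (-α) * (w n * a n)`.
  have := ENNReal.lintegral_mul_le_Lp_mul_Lq Measure.count hpq.symm
    (f := fun n : ℕ => ENNReal.ofReal (((n : ℝ) + 1) ^ (-α))) (g := fun n => w n * a n)
    measurable_from_nat.aemeasurable measurable_from_nat.aemeasurable
  simpa only [Pi.mul_apply, lintegral_count, ← mul_assoc, hw, one_mul, hprimal, hdual] using this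

noncomputable def dyadicIndex (m : ℕ) (t : ℝ) : ℕ := ⌊2 ^ m * (t + 1)⌋₊

noncomputable def dyadicPoint (m k : ℕ) : ℝ := k / 2 ^ m - 1

noncomputable def dyadicFloor (m : ℕ) (t : ℝ) : ℝ := dyadicPoint m (dyadicIndex m t)

theorem dyadicPoint_succ_two_mul (m k : ℕ) : dyadicPoint (m + 1) (2 * k) = dyadicPoint m k := by
  simp only [dyadicPoint, pow_succ]; push_cast; field_simp

section DyadicIndex

variable {m : ℕ} {t x y : ℝ}

theorem dyadicIndex_le_mul (ht : -1 ≤ t) : (dyadicIndex m t : ℝ) ≤ 2 ^ m * (t + 1) :=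
  Nat.floor_le (mul_nonneg (by positivity) (by linarith))

theorem lt_dyadicIndex_add_one (m : ℕ) (t : ℝ) : 2 ^ m * (t + 1) < dyadicIndex m t + 1 :=
  Nat.lt_floor_add_one _

theorem dyadicFloor_le (ht : -1 ≤ t) : dyadicFloor m t ≤ t := by
  have := dyadicIndex_le_mul (m := m) ht
  rw [dyadicFloor, dyadicPoint, sub_le_iff_le_add, div_le_iff₀ (by positivity)]
  linarith

theorem neg_one_le_dyadicPoint (k : ℕ) : -1 ≤ dyadicPoint m k := by
  rw [dyadicPoint, neg_le_sub_iff_le_add, le_add_iff_nonneg_left]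
  positivity

theorem tendsto_dyadicFloor (ht : t ∈ Set.Icc (-1 : ℝ) 1) :
    Tendsto (fun m => dyadicFloor m t) atTop (𝓝[Set.Icc (-1) 1] t) := by
  refine tendsto_nhdsWithin_iff.mpr ⟨?_, Eventually.of_forall fun m =>
    ⟨neg_one_le_dyadicPoint _, (dyadicFloor_le ht.1).trans ht.2⟩⟩
  have hlow : ∀ m : ℕ, t - (1 / 2) ^ m ≤ dyadicFloor m t := fun m => by
    have h : t + 1 < (dyadicIndex m t + 1) / 2 ^ m := by
      rw [lt_div_iff₀ (by positivity), mul_comm]; exact lt_dyadicIndex_add_one m t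
    rw [add_div] at h
    rw [dyadicFloor, dyadicPoint, div_pow, one_pow]
    linarith
  refine tendsto_of_tendsto_of_tendsto_of_le_of_le ?_ tendsto_const_nhds hlow
    fun m => dyadicFloor_le ht.1
  simpa using tendsto_const_nhds.sub
    (tendsto_pow_atTop_nhds_zero_of_lt_one (by norm_num : (0 : ℝ) ≤ 1 / 2) (by norm_num))

theorem two_mul_dyadicIndex_le (ht : -1 ≤ t) : 2 * dyadicIndex m t ≤ dyadicIndex (m + 1) t := by
  apply Nat.le_floor
  have := dyadicIndex_le_mul (m := m) ht
  push_cast; rw [pow_succ]; linarith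

theorem dyadicIndex_succ_le (m : ℕ) (t : ℝ) :
    dyadicIndex (m + 1) t ≤ 2 * dyadicIndex m t + 1 := by
  rw [← Nat.lt_succ_iff, dyadicIndex, Nat.floor_lt' (by omega)]
  have := lt_dyadicIndex_add_one m t
  push_cast; rw [pow_succ]; linarith

theorem dyadicIndex_le_of_le_one (ht : t ≤ 1) : dyadicIndex m t ≤ 2 ^ (m + 1) := by
  apply Nat.floor_le_of_le
  push_cast; rw [pow_succ]; gcongr; linarith

theorem dyadicIndex_lt_of_one_le (hx : -1 ≤ x) (hxy : 1 ≤ 2 ^ m * (y - x)) :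
    dyadicIndex m x < dyadicIndex m y := by
  apply Nat.lt_of_succ_le; apply Nat.le_floor
  have := dyadicIndex_le_mul (m := m) hx
  push_cast; linarith

theorem dyadicIndex_le_add_two (hy : -1 ≤ y) (hxy : 2 ^ m * (y - x) < 2) :
    dyadicIndex m y ≤ dyadicIndex m x + 2 := by
  have hy' := dyadicIndex_le_mul (m := m) hy
  have hx' := lt_dyadicIndex_add_one m x
  have hreal : (dyadicIndex m y : ℝ) < dyadicIndex m x + 3 := by linarith
  have : dyadicIndex m y < dyadicIndex m x + 3 := by exact_mod_cast hreal
  omega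

end DyadicIndex

noncomputable def dyadicVariation (f : ℝ → ℝ) (p : ℝ) (m : ℕ) : ℝ≥0∞ :=
  ∑ k ∈ range (2 ^ (m + 1)), edist (f (dyadicPoint m k)) (f (dyadicPoint m (k + 1))) ^ p

section DyadicVariation

variable (f : ℝ → ℝ) {p : ℝ} {m : ℕ} {t x y : ℝ}

theorem edist_dyadicFloor_rpow_le (hp : 1 ≤ p) (hx : x ∈ Set.Icc (-1 : ℝ) 1)
    (hy : y ∈ Set.Icc (-1 : ℝ) 1) (hlow : 1 ≤ 2 ^ m * (y - x))
    (hhigh : 2 ^ m * (y - x) < 2) :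
    edist (f (dyadicFloor m x)) (f (dyadicFloor m y)) ^ p ≤
      2 ^ (p - 1) * dyadicVariation f p m := by
  have hlt := dyadicIndex_lt_of_one_le hx.1 hlow
  have hle := dyadicIndex_le_add_two hy.1 hhigh
  have hy_top := dyadicIndex_le_of_le_one (m := m) hy.2
  refine rpow_le_mul_sum_rpow_of_le_sum (n := 2) hp ?_ ?_
    (edist_le_Ico_sum_edist (fun k => f (dyadicPoint m k)) hlt.le)
  · intro k hk; simp only [mem_Ico, mem_range] at hk ⊢; omega
  · simp only [Nat.card_Ico]; omega

theorem edist_dyadicFloor_succ_le (ht : -1 ≤ t) :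
    edist (f (dyadicFloor m t)) (f (dyadicFloor (m + 1) t)) ≤
      ∑ k ∈ Ico (2 * dyadicIndex m t) (dyadicIndex (m + 1) t),
        edist (f (dyadicPoint (m + 1) k)) (f (dyadicPoint (m + 1) (k + 1))) := by
  rw [dyadicFloor, ← dyadicPoint_succ_two_mul]
  exact edist_le_Ico_sum_edist (fun k => f (dyadicPoint (m + 1) k)) (two_mul_dyadicIndex_le ht)

theorem edist_dyadicFloor_succ_add_rpow_le (hp : 1 ≤ p) (hx : x ∈ Set.Icc (-1 : ℝ) 1)
    (hy : y ∈ Set.Icc (-1 : ℝ) 1) (hxy : dyadicIndex m x < dyadicIndex m y) :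
    (edist (f (dyadicFloor m x)) (f (dyadicFloor (m + 1) x)) +
      edist (f (dyadicFloor m y)) (f (dyadicFloor (m + 1) y))) ^ p ≤
      2 ^ (p - 1) * dyadicVariation f p (m + 1) := by
  have hx_succ := dyadicIndex_succ_le m x
  have hy_succ := dyadicIndex_succ_le m y
  have hy_two_mul := two_mul_dyadicIndex_le (m := m) hy.1
  have hy_top := dyadicIndex_le_of_le_one (m := m + 1) hy.2
  have hdisj : Disjoint (Ico (2 * dyadicIndex m x) (dyadicIndex (m + 1) x))
      (Ico (2 * dyadicIndex m y) (dyadicIndex (m + 1) y)) :=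
    Ico_disjoint_Ico_consecutive _ _ _ |>.mono_right (Ico_subset_Ico_left (by omega))
  refine rpow_le_mul_sum_rpow_of_le_sum (n := 2)
    (s := Ico (2 * dyadicIndex m x) (dyadicIndex (m + 1) x) ∪
      Ico (2 * dyadicIndex m y) (dyadicIndex (m + 1) y)) hp ?_ ?_ ?_
  · intro k hk; simp only [mem_union, mem_Ico, mem_range] at hk ⊢; omega
  · refine (card_union_le _ _).trans ?_; simp only [Nat.card_Ico]; omega
  · rw [sum_union hdisj]
    exact add_le_add (edist_dyadicFloor_succ_le f hx.1) (edist_dyadicFloor_succ_le f hy.1)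

end DyadicVariation

theorem Sp_eq_tsum_dyadicVariation (f : ℝ → ℝ) (nh : ℕ) (α : ℝ) {p : ℝ} (hp : 0 ≤ p) :
    Sp f nh α p =
      ∑' n : ℕ, ENNReal.ofReal (((n : ℝ) + 1) ^ (α * p)) * dyadicVariation f p (n + nh) := by
  refine tsum_congr fun n => congrArg _ (sum_congr rfl fun k _ => ?_)
  rw [edist_dist, Real.dist_eq, ENNReal.ofReal_rpow_of_nonneg (abs_nonneg _) hp, abs_sub_comm,
    dyadicPoint, dyadicPoint]
  push_cast
  rfl

theorem chainIncrements_dyadicFloor_rpow_le (f : ℝ → ℝ) {p : ℝ} (hp : 1 ≤ p) {nh : ℕ}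
    {x y : ℝ} (hx : x ∈ Set.Icc (-1 : ℝ) 1) (hy : y ∈ Set.Icc (-1 : ℝ) 1)
    (hlow : 1 ≤ 2 ^ nh * (y - x)) (hhigh : 2 ^ nh * (y - x) < 2) (n : ℕ) :
    chainIncrements (fun N => f (dyadicFloor (N + nh) x))
        (fun N => f (dyadicFloor (N + nh) y)) n ^ p
      ≤ 2 ^ (p - 1) * dyadicVariation f p (n + nh) := by
  cases n with
  | zero => simpa [chainIncrements] using edist_dyadicFloor_rpow_le f hp hx hy hlow hhigh
  | succ n =>
    simp only [chainIncrements, Nat.add_right_comm n 1 nh]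
    refine edist_dyadicFloor_succ_add_rpow_le f hp hx hy (dyadicIndex_lt_of_one_le hx.1 ?_)
    have hxy : 0 ≤ y - x := (pos_of_mul_pos_right (one_pos.trans_le hlow) (by positivity)).le
    calc (1 : ℝ) ≤ 2 ^ nh * (y - x) := hlow
      _ ≤ 2 ^ (n + nh) * (y - x) := by gcongr <;> norm_num

theorem edist_le_of_dyadic_scale {p α : ℝ} (hp : 1 < p) (hα : 1 - 1 / p < α) {f : ℝ → ℝ}
    (hf : ContinuousOn f (Set.Icc (-1) 1)) {nh : ℕ} {x y : ℝ} (hx : x ∈ Set.Icc (-1 : ℝ) 1)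
    (hy : y ∈ Set.Icc (-1 : ℝ) 1) (hlow : 1 ≤ 2 ^ nh * (y - x))
    (hhigh : 2 ^ nh * (y - x) < 2) :
    edist (f x) (f y) ≤
      ENNReal.ofReal (2 ^ ((p - 1) / p) * cConst α p) * (Sp f nh α p) ^ (1 / p) := by
  have hlim : ∀ t ∈ Set.Icc (-1 : ℝ) 1,
      Tendsto (fun N => f (dyadicFloor (N + nh) t)) atTop (𝓝 (f t)) := fun t ht =>
    (hf t ht).tendsto.comp ((tendsto_dyadicFloor ht).comp (tendsto_add_atTop_nat nh))
  have hp0 : 0 < p := by linarith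
  calc edist (f x) (f y)
      ≤ ∑' n, chainIncrements (fun N => f (dyadicFloor (N + nh) x))
          (fun N => f (dyadicFloor (N + nh) y)) n :=
        edist_le_tsum_chainIncrements (hlim x hx) (hlim y hy)
    _ ≤ ENNReal.ofReal (cConst α p) *
        (∑' n : ℕ, ENNReal.ofReal (((n : ℝ) + 1) ^ (α * p)) *
          chainIncrements (fun N => f (dyadicFloor (N + nh) x))
            (fun N => f (dyadicFloor (N + nh) y)) n ^ p) ^ (1 / p) :=
        tsum_le_ofReal_cConst_mul hp hα _
    _ ≤ ENNReal.ofReal (cConst α p) * (2 ^ (p - 1) * Sp f nh α p) ^ (1 / p) := by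
        rw [Sp_eq_tsum_dyadicVariation f nh α hp0.le, ← ENNReal.tsum_mul_left]
        gcongr ENNReal.ofReal (cConst α p) * ?_ ^ (1 / p)
        refine ENNReal.tsum_le_tsum fun n => ?_
        rw [mul_left_comm]
        exact mul_le_mul_right
          (chainIncrements_dyadicFloor_rpow_le f hp.le hx hy hlow hhigh n) _
    _ = ENNReal.ofReal (2 ^ ((p - 1) / p) * cConst α p) * (Sp f nh α p) ^ (1 / p) := by
        rw [ENNReal.mul_rpow_of_nonneg _ _ (by positivity), ← ENNReal.rpow_mul,
          ENNReal.ofReal_mul (by positivity), ← ENNReal.ofReal_rpow_of_pos two_pos,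
          ENNReal.ofReal_ofNat, mul_one_div, mul_left_comm, mul_assoc]

theorem frame_sup_bound_general (p α : ℝ) (hp : 1 < p) (hα : 1 - 1/p < α)
    (f : ℝ → ℝ) (hf : ContinuousOn f (Set.Icc (-1) 1))
    (h : ℝ) (h1 : h ≤ 1)
    (nh : ℕ) (hn1 : (2:ℝ) ^ (-(nh:ℤ)) ≤ h) (hn2 : h < (2:ℝ) ^ (-(nh:ℤ) + 1)) :
    (⨆ u : Set.Icc (0:ℝ) 1, ENNReal.ofReal |f (h - 1 + u) - f (-1 + u)|) ≤
      ENNReal.ofReal (2 ^ ((p - 1) / p) * cConst α p) * (Sp f nh α p) ^ (1/p) := by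
  have h2nh : (0 : ℝ) < 2 ^ nh := by positivity
  have hlow : 1 ≤ 2 ^ nh * h := by
    rwa [zpow_neg, zpow_natCast, inv_le_iff_one_le_mul₀ h2nh, mul_comm] at hn1
  have hhigh : 2 ^ nh * h < 2 := by
    rwa [zpow_add₀ two_ne_zero, zpow_neg, zpow_natCast, zpow_one, inv_mul_eq_div,
      lt_div_iff₀ h2nh, mul_comm] at hn2
  have h0 : 0 < h := pos_of_mul_pos_right (one_pos.trans_le hlow) h2nh.le
  refine iSup_le fun ⟨u, hu0, hu1⟩ => ?_
  rw [← Real.dist_eq, ← edist_dist, edist_comm]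
  refine edist_le_of_dyadic_scale hp hα hf ⟨by linarith, by linarith⟩ ⟨by linarith, by linarith⟩
    ?_ ?_ <;> rwa [add_sub_add_right_eq_sub, sub_neg_eq_add, sub_add_cancel]

/-- Sup-norm bound for the frame increments: for `p > 1`, `α > 1 - 1/p`, `f ∈ C([-1,1])` and
`h ∈ (0,1]`, with `nh = n(h)` the unique integer with `2^{-nh} ≤ h < 2^{-nh+1}`,
`sup_{u ∈ [0,1]} |T_h^f(u) - T_0^f(u)| ≤ 2^{(p-1)/p} c(α,p) S_p(f,h,α)^{1/p}` in `[0,∞]`. -/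
theorem frame_sup_bound (p α : ℝ) (hp : 1 < p) (hα : 1 - 1/p < α)
    (f : ℝ → ℝ) (hf : ContinuousOn f (Set.Icc (-1) 1))
    (h : ℝ) (h0 : 0 < h) (h1 : h ≤ 1)
    (nh : ℕ) (hn1 : (2:ℝ) ^ (-(nh:ℤ)) ≤ h) (hn2 : h < (2:ℝ) ^ (-(nh:ℤ) + 1)) :
    (⨆ u : Set.Icc (0:ℝ) 1, ENNReal.ofReal |f (h - 1 + u) - f (-1 + u)|) ≤
      ENNReal.ofReal (2 ^ ((p - 1) / p) * cConst α p) * (Sp f nh α p) ^ (1/p) :=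
  frame_sup_bound_general p α hp hα f hf h h1 nh hn1 hn2
end

section
/- Let p > 1, α > 1 − 1/p, f ∈ C([−1,1],ℝ) and 0 ≤ h_1 < h_2 ≤ 1. Then sup_{u∈[0,1]} |T_{h_2}^f(u) − T_{h_1}^f(u)| + V_p(T_{h_2}^f − T_{h_1}^f) ≤ (4 + 2^{(p−1)/p}) c(α,p) · S_p(f, h_2 − h_1, α)^{1/p} (as an inequality in [0,∞]). -/
open MeasureTheory ProbabilityTheory Filter
open scoped ENNReal NNReal

/-- The `p`-variation functional of a path `g` (restricted to `[0,1]` via dissections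
`0 = t 0 < t 1 < ... < t n = 1`), with values in `[0,∞]`. -/
noncomputable def pVar {V : Type*} [NormedAddCommGroup V] (p : ℝ) (g : ℝ → V) : ℝ≥0∞ :=
  ⨆ (n : ℕ) (t : Fin (n+1) → ℝ) (_ : StrictMono t) (_ : t 0 = 0) (_ : t (Fin.last n) = 1),
    (∑ i : Fin n, (ENNReal.ofReal ‖g (t i.succ) - g (t i.castSucc)‖) ^ p) ^ p⁻¹

/-! For `[u, v] ⊆ [-1, 1]` of length `< 2 ^ (1 - n(h))`, chain `f v - f u` through the first and
last dyadic points of `[u, v]` at the levels `L₀ + j`, starting from a level `L₀ ≥ n(h)` at which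
these two points are at most one dyadic step apart. Each refinement adds two disjoint dyadic
intervals inside `[u, v]`, so Hölder's inequality with weights `(j + 1) ^ α` bounds `|f v - f u| ^ p`
by `2 ^ (p - 1) c(α,p) ^ p` times the part of `S_p` carried by dyadic intervals inside `[u, v]`.

The sup term is one such increment. An increment of `T_{h₂}^f - T_{h₁}^f` over `[s, t]` is the
difference of the increments of `f` over `[max (h₂ - 1 + s) (h₁ - 1 + t), h₂ - 1 + t]` and
`[h₁ - 1 + s, min (h₂ - 1 + s) (h₁ - 1 + t)]`, both of length `≤ h₂ - h₁`. Along a dissection each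
of these two families of intervals is non-overlapping, so their parts of `S_p` add up to at most
`S_p`. With `M = (2 ^ (p - 1) c(α,p) ^ p S_p) ^ (1 / p)` this gives `sup ≤ M` and `V_p ≤ 2 M`, and
`3 · 2 ^ ((p - 1) / p) ≤ 4 + 2 ^ ((p - 1) / p)`.
-/

open Topology

theorem apply_max_add_apply_min {α β : Type*} [LinearOrder α] [AddCommMagma β] (F : α → β)
    (x y : α) : F (max x y) + F (min x y) = F x + F y := by
  rcases le_total x y with h | h <;> simp [h, add_comm]

theorem abs_sub_sub_le_max_min (f : ℝ → ℝ) (a b c d : ℝ) :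
    |(f d - f c) - (f b - f a)| ≤ |f d - f (max b c)| + |f (min b c) - f a| := by
  have := apply_max_add_apply_min f b c
  calc |(f d - f c) - (f b - f a)| = |(f d - f (max b c)) - (f (min b c) - f a)| := by
        congr 1; linarith
    _ ≤ _ := abs_sub _ _

theorem ENNReal.ofReal_abs_sub_le_tsum_of_tendsto {x y : ℕ → ℝ} {a b : ℝ}
    (hx : Tendsto x atTop (𝓝 a)) (hy : Tendsto y atTop (𝓝 b)) {d : ℕ → ℝ≥0∞}
    (h0 : ENNReal.ofReal |y 0 - x 0| ≤ d 0)
    (hsucc : ∀ j, ENNReal.ofReal |x j - x (j + 1)| + ENNReal.ofReal |y (j + 1) - y j| ≤ d (j + 1)) :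
    ENNReal.ofReal |b - a| ≤ ∑' j, d j := by
  have hpartial : ∀ J, ENNReal.ofReal |y J - x J| ≤ ∑ j ∈ Finset.range (J + 1), d j := by
    intro J
    induction J with
    | zero => simpa using h0
    | succ J ih =>
      calc ENNReal.ofReal |y (J + 1) - x (J + 1)|
          ≤ ENNReal.ofReal |y J - x J| +
              (ENNReal.ofReal |x J - x (J + 1)| + ENNReal.ofReal |y (J + 1) - y J|) := by
            rw [← ENNReal.ofReal_add (by positivity) (by positivity),
              ← ENNReal.ofReal_add (by positivity) (by positivity)]
            refine ENNReal.ofReal_le_ofReal ?_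
            calc |y (J + 1) - x (J + 1)|
                = |(y J - x J) + (x J - x (J + 1)) + (y (J + 1) - y J)| := by ring_nf
              _ ≤ _ := abs_add_three _ _ _
              _ = _ := add_assoc _ _ _
        _ ≤ ∑ j ∈ Finset.range (J + 1 + 1), d j := by
            rw [Finset.sum_range_succ]; exact add_le_add ih (hsucc J)
  refine le_of_tendsto' ((ENNReal.continuous_ofReal.tendsto _).comp (hy.sub hx).abs) fun J => ?_
  exact (hpartial J).trans (ENNReal.sum_le_tsum _)

theorem cConst_nonneg (α p : ℝ) : 0 ≤ cConst α p :=
  Real.rpow_nonneg (tsum_nonneg fun _ => Real.rpow_nonneg (by positivity) _) _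

theorem tsum_rpow_le_cConst_rpow_mul {p α : ℝ} (hp : 1 < p) (hα : 1 - 1 / p < α)
    (θ : ℕ → ℝ≥0∞) :
    (∑' j, θ j) ^ p ≤
      ENNReal.ofReal (cConst α p) ^ p *
        ∑' j : ℕ, ENNReal.ofReal (((j : ℝ) + 1) ^ (α * p)) * θ j ^ p := by
  have hp0 : 0 < p := by linarith
  have hpq := Real.HolderConjugate.conjExponent hp
  set q := p.conjExponent
  have hq : q = p / (p - 1) := rfl
  have hpos (j : ℕ) : (0 : ℝ) < (j : ℝ) + 1 := by positivity
  set w : ℕ → ℝ≥0∞ := fun j => ENNReal.ofReal (((j : ℝ) + 1) ^ α)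
  set w' : ℕ → ℝ≥0∞ := fun j => ENNReal.ofReal (((j : ℝ) + 1) ^ (-α))
  set S := ∑' n : ℕ, ((n : ℝ) + 1) ^ (-(α * p / (p - 1)))
  have hS : ∑' j, w' j ^ q = ENNReal.ofReal S := by
    have hsum : Summable fun n : ℕ => ((n : ℝ) + 1) ^ (-(α * p / (p - 1))) := by
      refine (summable_nat_add_iff 1).mpr
        ((Real.summable_nat_rpow (p := -(α * p / (p - 1)))).mpr ?_) |>.congr fun n => ?_
      · rw [neg_lt_neg_iff, lt_div_iff₀ (by linarith)]
        have : (1 - 1 / p) * p = p - 1 := by field_simp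
        nlinarith
      · push_cast; rfl
    rw [ENNReal.ofReal_tsum_of_nonneg (fun n => by positivity) hsum]
    refine tsum_congr fun j => ?_
    rw [ENNReal.ofReal_rpow_of_nonneg (by positivity) hpq.symm.nonneg, ← Real.rpow_mul (hpos j).le,
      hq, neg_mul, mul_div_assoc]
  have hc : ENNReal.ofReal (cConst α p) ^ p = ENNReal.ofReal S ^ (p - 1) := by
    rw [cConst, ENNReal.ofReal_rpow_of_nonneg (by positivity) hp0.le,
      ← Real.rpow_mul (tsum_nonneg fun n => by positivity),
      ENNReal.ofReal_rpow_of_nonneg (tsum_nonneg fun n => by positivity) (by linarith),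
      div_mul_cancel₀ _ hp0.ne']
  -- Hölder for `θ j = (j + 1) ^ (-α) * ((j + 1) ^ α * θ j)`.
  have hHolder : ∑' j, θ j ≤ (∑' j, (w j * θ j) ^ p) ^ (1 / p) * (∑' j, w' j ^ q) ^ (1 / q) := by
    have h := ENNReal.lintegral_mul_le_Lp_mul_Lq Measure.count hpq
      (measurable_from_top (f := fun j => w j * θ j)).aemeasurable
      (measurable_from_top (f := w')).aemeasurable
    simp only [lintegral_count, Pi.mul_apply] at h
    refine le_of_eq_of_le (tsum_congr fun j => ?_) h
    rw [mul_right_comm, ← ENNReal.ofReal_mul (by positivity), ← Real.rpow_add (hpos j),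
      add_neg_cancel, Real.rpow_zero, ENNReal.ofReal_one, one_mul]
  calc (∑' j, θ j) ^ p
      ≤ ((∑' j, (w j * θ j) ^ p) ^ (1 / p) * (∑' j, w' j ^ q) ^ (1 / q)) ^ p :=
        ENNReal.rpow_le_rpow hHolder hp0.le
    _ = ENNReal.ofReal S ^ (p - 1) * ∑' j, (w j * θ j) ^ p := by
        rw [ENNReal.mul_rpow_of_nonneg _ _ hp0.le, ← ENNReal.rpow_mul, ← ENNReal.rpow_mul, hS,
          one_div_mul_cancel hp0.ne', ENNReal.rpow_one, mul_comm]
        congr 2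
        rw [hq]; field_simp
    _ = _ := by
        rw [hc]
        congr 1
        refine tsum_congr fun j => ?_
        rw [ENNReal.mul_rpow_of_nonneg _ _ hp0.le, ENNReal.ofReal_rpow_of_nonneg (by positivity)
          hp0.le, ← Real.rpow_mul (hpos j).le]

theorem Nat.ceil_two_mul_le (x : ℝ) : ⌈2 * x⌉₊ ≤ 2 * ⌈x⌉₊ :=
  Nat.ceil_le.mpr (by push_cast; linarith [Nat.le_ceil x])

theorem Nat.two_mul_ceil_le {x : ℝ} (hx : 0 ≤ x) : 2 * ⌈x⌉₊ ≤ ⌈2 * x⌉₊ + 1 := by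
  have : ((2 * ⌈x⌉₊ : ℕ) : ℝ) < ((⌈2 * x⌉₊ + 1 : ℕ) : ℝ) + 1 := by
    push_cast; linarith [Nat.ceil_lt_add_one hx, Nat.le_ceil (2 * x)]
  exact Nat.lt_add_one_iff.mp (by exact_mod_cast this)

theorem Nat.two_mul_floor_le {x : ℝ} (hx : 0 ≤ x) : 2 * ⌊x⌋₊ ≤ ⌊2 * x⌋₊ :=
  Nat.le_floor (by push_cast; linarith [Nat.floor_le hx])

theorem Nat.floor_two_mul_le {x : ℝ} (hx : 0 ≤ x) : ⌊2 * x⌋₊ ≤ 2 * ⌊x⌋₊ + 1 := by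
  have : (⌊2 * x⌋₊ : ℝ) < ((2 * ⌊x⌋₊ + 1 : ℕ) : ℝ) + 1 := by
    push_cast; linarith [Nat.floor_le (by linarith : 0 ≤ 2 * x), Nat.lt_floor_add_one x]
  exact Nat.lt_add_one_iff.mp (by exact_mod_cast this)

namespace DyadicChaining

open Finset

noncomputable section

def grid (L k : ℕ) : ℝ := k / 2 ^ L - 1

def incr (f : ℝ → ℝ) (p : ℝ) (L k : ℕ) : ℝ≥0∞ :=
  ENNReal.ofReal (|f (grid L (k + 1)) - f (grid L k)| ^ p)

/-- The part of the level-`L` sum in `Sp` that comes from dyadic intervals inside `[u, v]`. -/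
def levelVar (f : ℝ → ℝ) (p : ℝ) (L : ℕ) (u v : ℝ) : ℝ≥0∞ :=
  ∑ k ∈ (range (2 ^ (L + 1))).filter (fun k => u ≤ grid L k ∧ grid L (k + 1) ≤ v), incr f p L k

def weightedVar (f : ℝ → ℝ) (p α : ℝ) (nh : ℕ) (u v : ℝ) : ℝ≥0∞ :=
  ∑' n : ℕ, ENNReal.ofReal (((n : ℝ) + 1) ^ (α * p)) * levelVar f p (n + nh) u v

def chainConst (α p : ℝ) : ℝ≥0∞ := 2 ^ (p - 1) * ENNReal.ofReal (cConst α p) ^ p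

variable {f : ℝ → ℝ} {p α u v : ℝ} {nh L : ℕ}

theorem grid_strictMono (L : ℕ) : StrictMono (grid L) := fun k l h => by
  unfold grid; gcongr

theorem grid_two_mul (L k : ℕ) : grid (L + 1) (2 * k) = grid L k := by
  unfold grid; push_cast; rw [pow_succ]; field_simp

theorem Sp_eq_tsum_sum_incr (f : ℝ → ℝ) (nh : ℕ) (α p : ℝ) :
    Sp f nh α p = ∑' n : ℕ, ENNReal.ofReal (((n : ℝ) + 1) ^ (α * p)) *
      ∑ k ∈ range (2 ^ (n + nh + 1)), incr f p (n + nh) k := by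
  simp only [Sp, incr, grid]; push_cast; rfl

theorem sum_levelVar_le {m : ℕ} {a b : Fin m → ℝ} (hord : ∀ i j, i < j → b i ≤ a j) (L : ℕ) :
    ∑ i, levelVar f p L (a i) (b i) ≤ ∑ k ∈ range (2 ^ (L + 1)), incr f p L k := by
  classical
  simp only [levelVar]
  rw [← sum_biUnion]
  · exact sum_le_sum_of_subset (biUnion_subset.mpr fun i _ => filter_subset _ _)
  · intro i _ j _ hij
    refine disjoint_filter.mpr fun k _ hi hj => ?_
    have hk := grid_strictMono L (Nat.lt_succ_self k)
    rcases lt_or_gt_of_ne hij with h | h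
    · linarith [hord i j h, hi.2, hj.1]
    · linarith [hord j i h, hi.1, hj.2]

theorem sum_weightedVar_le_Sp {m : ℕ} {a b : Fin m → ℝ} (hord : ∀ i j, i < j → b i ≤ a j) :
    ∑ i, weightedVar f p α nh (a i) (b i) ≤ Sp f nh α p := by
  simp only [weightedVar]
  rw [Sp_eq_tsum_sum_incr, ← Summable.tsum_finsetSum fun _ _ => ENNReal.summable]
  refine ENNReal.tsum_le_tsum fun n => ?_
  rw [← mul_sum]
  gcongr
  exact sum_levelVar_le hord _

theorem weightedVar_le_Sp : weightedVar f p α nh u v ≤ Sp f nh α p := by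
  simpa using sum_weightedVar_le_Sp (f := f) (p := p) (α := α) (nh := nh) (a := fun _ : Fin 1 => u)
    (b := fun _ => v) (by simp)

theorem sum_Ico_incr_le_levelVar {a b : ℕ} (ha : u ≤ grid L a) (hb : grid L b ≤ v)
    (hb' : b ≤ 2 ^ (L + 1)) : ∑ k ∈ Ico a b, incr f p L k ≤ levelVar f p L u v := by
  refine sum_le_sum_of_subset fun k hk => ?_
  rw [mem_Ico] at hk
  simp only [mem_filter, mem_range]
  exact ⟨by omega, ha.trans ((grid_strictMono L).monotone hk.1),
    ((grid_strictMono L).monotone hk.2).trans hb⟩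

theorem rpow_le_sum_Ico_incr (hp : 0 < p) {a b : ℕ} (hab : a ≤ b) (hba : b ≤ a + 1) :
    ENNReal.ofReal |f (grid L b) - f (grid L a)| ^ p ≤ ∑ k ∈ Ico a b, incr f p L k := by
  obtain rfl | rfl : b = a ∨ b = a + 1 := by omega
  · simp [ENNReal.zero_rpow_of_pos hp]
  · rw [Nat.Ico_succ_singleton, sum_singleton, incr,
      ENNReal.ofReal_rpow_of_nonneg (abs_nonneg _) hp.le]

theorem rpow_add_rpow_le_levelVar (hp : 0 < p) {a₁ b₁ a₂ b₂ : ℕ} (h₁ : a₁ ≤ b₁)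
    (h₁' : b₁ ≤ a₁ + 1) (h₁₂ : b₁ ≤ a₂) (h₂ : a₂ ≤ b₂) (h₂' : b₂ ≤ a₂ + 1)
    (hu : u ≤ grid L a₁) (hv : grid L b₂ ≤ v) (hb : b₂ ≤ 2 ^ (L + 1)) :
    ENNReal.ofReal |f (grid L b₁) - f (grid L a₁)| ^ p +
        ENNReal.ofReal |f (grid L b₂) - f (grid L a₂)| ^ p ≤ levelVar f p L u v :=
  calc _ ≤ ∑ k ∈ Ico a₁ b₁, incr f p L k + ∑ k ∈ Ico a₂ b₂, incr f p L k :=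
        add_le_add (rpow_le_sum_Ico_incr hp h₁ h₁') (rpow_le_sum_Ico_incr hp h₂ h₂')
    _ ≤ ∑ k ∈ Ico a₁ a₂, incr f p L k + ∑ k ∈ Ico a₂ b₂, incr f p L k :=
        add_le_add (sum_le_sum_of_subset (Ico_subset_Ico_right h₁₂)) le_rfl
    _ = ∑ k ∈ Ico a₁ b₂, incr f p L k := sum_Ico_consecutive _ (h₁.trans h₁₂) h₂
    _ ≤ levelVar f p L u v := sum_Ico_incr_le_levelVar hu hv hb

/-- `grid L (ceilIdx u L)` is the first level-`L` grid point `≥ u`, and `grid L (floorIdx v L)`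
the last one `≤ v`. -/
def ceilIdx (u : ℝ) (L : ℕ) : ℕ := ⌈(u + 1) * 2 ^ L⌉₊

def floorIdx (v : ℝ) (L : ℕ) : ℕ := ⌊(v + 1) * 2 ^ L⌋₊

theorem add_one_mul_two_pow_nonneg (hu : -1 ≤ u) (L : ℕ) : 0 ≤ (u + 1) * 2 ^ L :=
  mul_nonneg (by linarith) (by positivity)

theorem add_one_mul_two_pow_succ (u : ℝ) (L : ℕ) :
    (u + 1) * 2 ^ (L + 1) = 2 * ((u + 1) * 2 ^ L) := by
  ring

theorem le_grid_ceilIdx (u : ℝ) (L : ℕ) : u ≤ grid L (ceilIdx u L) := by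
  rw [grid, le_sub_iff_add_le, le_div_iff₀ (by positivity)]
  exact Nat.le_ceil _

theorem grid_ceilIdx_lt (hu : -1 ≤ u) (L : ℕ) : grid L (ceilIdx u L) < u + (2 ^ L)⁻¹ := by
  rw [grid, sub_lt_iff_lt_add, div_lt_iff₀ (by positivity)]
  calc _ < (u + 1) * 2 ^ L + 1 := Nat.ceil_lt_add_one (add_one_mul_two_pow_nonneg hu L)
    _ = _ := by field_simp; ring

theorem grid_floorIdx_le (hv : -1 ≤ v) (L : ℕ) : grid L (floorIdx v L) ≤ v := by
  rw [grid, sub_le_iff_le_add, div_le_iff₀ (by positivity)]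
  exact Nat.floor_le (add_one_mul_two_pow_nonneg hv L)

theorem lt_grid_floorIdx (v : ℝ) (L : ℕ) : v - (2 ^ L)⁻¹ < grid L (floorIdx v L) := by
  rw [grid, lt_sub_iff_add_lt, lt_div_iff₀ (by positivity)]
  calc _ = (v + 1) * 2 ^ L - 1 := by field_simp; ring
    _ < _ := sub_lt_iff_lt_add.mpr (Nat.lt_floor_add_one _)

theorem ceilIdx_succ_le (u : ℝ) (L : ℕ) : ceilIdx u (L + 1) ≤ 2 * ceilIdx u L := by
  rw [ceilIdx, add_one_mul_two_pow_succ]; exact Nat.ceil_two_mul_le _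

theorem two_mul_ceilIdx_le (hu : -1 ≤ u) (L : ℕ) : 2 * ceilIdx u L ≤ ceilIdx u (L + 1) + 1 := by
  rw [ceilIdx, ceilIdx, add_one_mul_two_pow_succ]
  exact Nat.two_mul_ceil_le (add_one_mul_two_pow_nonneg hu L)

theorem two_mul_floorIdx_le (hv : -1 ≤ v) (L : ℕ) : 2 * floorIdx v L ≤ floorIdx v (L + 1) := by
  rw [floorIdx, floorIdx, add_one_mul_two_pow_succ]
  exact Nat.two_mul_floor_le (add_one_mul_two_pow_nonneg hv L)

theorem floorIdx_succ_le (hv : -1 ≤ v) (L : ℕ) : floorIdx v (L + 1) ≤ 2 * floorIdx v L + 1 := by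
  rw [floorIdx, floorIdx, add_one_mul_two_pow_succ]
  exact Nat.floor_two_mul_le (add_one_mul_two_pow_nonneg hv L)

theorem floorIdx_le_two_pow (hv : v ≤ 1) (L : ℕ) : floorIdx v L ≤ 2 ^ (L + 1) := by
  refine Nat.floor_le_of_le ?_
  push_cast
  rw [pow_succ]
  nlinarith [pow_pos (two_pos (α := ℝ)) L]

theorem ceilIdx_le_floorIdx_of_le (hv : -1 ≤ v) {L L' : ℕ} (h : ceilIdx u L ≤ floorIdx v L)
    (hL : L ≤ L') : ceilIdx u L' ≤ floorIdx v L' := by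
  induction L', hL using Nat.le_induction with
  | base => exact h
  | succ L' _ ih =>
    have := ceilIdx_succ_le u L'
    have := two_mul_floorIdx_le hv L'
    omega

theorem exists_start_level (hu : -1 ≤ u) (huv : u < v) (hlen : (v - u) * 2 ^ nh < 2) :
    ∃ L, nh ≤ L ∧ ceilIdx u L ≤ floorIdx v L ∧ floorIdx v L ≤ ceilIdx u L + 1 := by
  have hv : -1 ≤ v := by linarith
  have hex : ∃ m, ceilIdx u (nh + m) ≤ floorIdx v (nh + m) := by
    obtain ⟨m, hm⟩ := pow_unbounded_of_one_lt (v - u)⁻¹ (one_lt_two (α := ℝ))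
    refine ⟨m, Nat.ceil_le.mpr ?_⟩
    have h1 : 1 ≤ (v - u) * 2 ^ (nh + m) := by
      rw [inv_lt_iff_one_lt_mul₀ (by linarith)] at hm
      rw [pow_add]
      nlinarith [one_le_pow₀ (one_le_two (α := ℝ)) (n := nh), pow_pos (two_pos (α := ℝ)) m]
    unfold floorIdx
    linarith [Nat.lt_floor_add_one ((v + 1) * 2 ^ (nh + m))]
  classical
  rcases hfind : Nat.find hex with _ | m
  · refine ⟨nh, le_rfl, by simpa [hfind] using Nat.find_spec hex, ?_⟩
    have h1 : (floorIdx v nh : ℝ) ≤ (v + 1) * 2 ^ nh :=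
      Nat.floor_le (add_one_mul_two_pow_nonneg hv nh)
    have h2 : (u + 1) * 2 ^ nh ≤ ceilIdx u nh := Nat.le_ceil _
    have : (floorIdx v nh : ℝ) < ((ceilIdx u nh + 1 : ℕ) : ℝ) + 1 := by push_cast; linarith
    exact Nat.lt_add_one_iff.mp (by exact_mod_cast this)
  · have hmin := Nat.find_min hex (show m < Nat.find hex by omega)
    have hspec := Nat.find_spec hex
    rw [hfind, ← add_assoc] at hspec
    refine ⟨nh + m + 1, by omega, hspec, ?_⟩
    have := floorIdx_succ_le hv (nh + m)
    have := two_mul_ceilIdx_le hu (nh + m)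
    omega

theorem chain_step_le_levelVar (hp : 0 < p) (hu : -1 ≤ u) (huv : u ≤ v) (hv : v ≤ 1)
    (h : ceilIdx u L ≤ floorIdx v L) :
    ENNReal.ofReal |f (grid L (ceilIdx u L)) - f (grid (L + 1) (ceilIdx u (L + 1)))| ^ p +
      ENNReal.ofReal |f (grid (L + 1) (floorIdx v (L + 1))) - f (grid L (floorIdx v L))| ^ p ≤
        levelVar f p (L + 1) u v := by
  have hv' : -1 ≤ v := by linarith
  rw [← grid_two_mul, ← grid_two_mul L (floorIdx v L)]
  have := ceilIdx_succ_le u L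
  have := two_mul_ceilIdx_le hu L
  have := two_mul_floorIdx_le hv' L
  have := floorIdx_succ_le hv' L
  exact rpow_add_rpow_le_levelVar hp (by omega) (by omega) (by omega) (by omega) (by omega)
    (le_grid_ceilIdx u _) (grid_floorIdx_le hv' _) (floorIdx_le_two_pow hv _)

theorem tendsto_grid_ceilIdx (hu : -1 ≤ u) :
    Tendsto (fun L => grid L (ceilIdx u L)) atTop (𝓝 u) := by
  refine tendsto_of_tendsto_of_tendsto_of_le_of_le tendsto_const_nhds ?_ (le_grid_ceilIdx u)
    fun L => (grid_ceilIdx_lt hu L).le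
  simpa using tendsto_const_nhds.add
    (tendsto_inv_atTop_zero.comp (tendsto_pow_atTop_atTop_of_one_lt (one_lt_two (α := ℝ))))

theorem tendsto_grid_floorIdx (hv : -1 ≤ v) :
    Tendsto (fun L => grid L (floorIdx v L)) atTop (𝓝 v) := by
  refine tendsto_of_tendsto_of_tendsto_of_le_of_le ?_ tendsto_const_nhds
    (fun L => (lt_grid_floorIdx v L).le) (grid_floorIdx_le hv)
  simpa using tendsto_const_nhds.sub
    (tendsto_inv_atTop_zero.comp (tendsto_pow_atTop_atTop_of_one_lt (one_lt_two (α := ℝ))))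

theorem tsum_levelVar_le_weightedVar (hαp : 0 ≤ α * p) {L₀ : ℕ} (h : nh ≤ L₀) :
    ∑' j : ℕ, ENNReal.ofReal (((j : ℝ) + 1) ^ (α * p)) * levelVar f p (L₀ + j) u v ≤
      weightedVar f p α nh u v := by
  obtain ⟨m, rfl⟩ := Nat.exists_eq_add_of_le h
  calc _ ≤ ∑' j : ℕ, ENNReal.ofReal ((((m + j : ℕ) : ℝ) + 1) ^ (α * p)) *
        levelVar f p (m + j + nh) u v := by
        refine ENNReal.tsum_le_tsum fun j => ?_
        rw [show nh + m + j = m + j + nh by ring]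
        gcongr
        simp
    _ ≤ _ := ENNReal.tsum_comp_le_tsum_of_injective (add_right_injective m)
        fun n => ENNReal.ofReal (((n : ℝ) + 1) ^ (α * p)) * levelVar f p (n + nh) u v

theorem ofReal_abs_sub_le_tsum_levelVar (hp : 1 < p) (hf : ContinuousOn f (Set.Icc (-1) 1))
    (hu : -1 ≤ u) (huv : u < v) (hv : v ≤ 1) {L₀ : ℕ} (hstart : ceilIdx u L₀ ≤ floorIdx v L₀)
    (hbase : floorIdx v L₀ ≤ ceilIdx u L₀ + 1) :
    ENNReal.ofReal |f v - f u| ≤ ∑' j, (2 ^ (p - 1) * levelVar f p (L₀ + j) u v) ^ p⁻¹ := by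
  have hp0 : 0 < p := by linarith
  have hv' : -1 ≤ v := by linarith
  have hlim {x : ℕ → ℝ} {a : ℝ} (hx : Tendsto x atTop (𝓝 a))
      (hxa : ∀ j, x j ∈ Set.Icc (-1 : ℝ) 1) (ha : a ∈ Set.Icc (-1 : ℝ) 1) :
      Tendsto (fun j => f (x j)) atTop (𝓝 (f a)) :=
    (hf a ha).tendsto.comp (tendsto_nhdsWithin_iff.mpr ⟨hx, Eventually.of_forall hxa⟩)
  have hshift : Tendsto (L₀ + ·) atTop atTop :=
    (tendsto_add_atTop_nat L₀).congr fun j => add_comm j L₀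
  have hAB (j : ℕ) : ceilIdx u (L₀ + j) ≤ floorIdx v (L₀ + j) :=
    ceilIdx_le_floorIdx_of_le hv' hstart (Nat.le_add_right _ _)
  have hPQ (j : ℕ) := (grid_strictMono (L₀ + j)).monotone (hAB j)
  have hP := hlim ((tendsto_grid_ceilIdx hu).comp hshift)
    (fun j => ⟨hu.trans (le_grid_ceilIdx u _), ((hPQ j).trans (grid_floorIdx_le hv' _)).trans hv⟩)
    ⟨hu, huv.le.trans hv⟩
  have hQ := hlim ((tendsto_grid_floorIdx hv').comp hshift)
    (fun j => ⟨hu.trans ((le_grid_ceilIdx u _).trans (hPQ j)), (grid_floorIdx_le hv' _).trans hv⟩)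
    ⟨hv', hv⟩
  refine ENNReal.ofReal_abs_sub_le_tsum_of_tendsto hP hQ ?_ fun j => ?_ <;>
    refine (ENNReal.le_rpow_inv_iff hp0).mpr ?_
  · simp only [Function.comp_apply, add_zero]
    calc _ ≤ levelVar f p L₀ u v :=
          (rpow_le_sum_Ico_incr hp0 hstart hbase).trans (sum_Ico_incr_le_levelVar
            (le_grid_ceilIdx u _) (grid_floorIdx_le hv' _) (floorIdx_le_two_pow hv _))
      _ ≤ _ := le_mul_of_one_le_left zero_le (ENNReal.one_le_rpow one_le_two (by linarith))
  · exact (ENNReal.rpow_add_le_mul_rpow_add_rpow _ _ hp.le).trans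
      (mul_le_mul_right (chain_step_le_levelVar hp0 hu huv.le hv (hAB j)) _)

theorem rpow_abs_sub_le_chainConst_mul_weightedVar (hp : 1 < p) (hα : 1 - 1 / p < α)
    (hf : ContinuousOn f (Set.Icc (-1) 1)) (hu : -1 ≤ u) (huv : u < v) (hv : v ≤ 1)
    (hlen : (v - u) * 2 ^ nh < 2) :
    ENNReal.ofReal |f v - f u| ^ p ≤ chainConst α p * weightedVar f p α nh u v := by
  have hp0 : 0 < p := by linarith
  have hαp : 0 ≤ α * p := by
    have : 0 < 1 - 1 / p := by rw [sub_pos, div_lt_one hp0]; exact hp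
    nlinarith
  obtain ⟨L₀, hnh, hstart, hbase⟩ := exists_start_level hu huv hlen
  set d : ℕ → ℝ≥0∞ := fun j => (2 ^ (p - 1) * levelVar f p (L₀ + j) u v) ^ p⁻¹
  calc ENNReal.ofReal |f v - f u| ^ p ≤ (∑' j, d j) ^ p :=
        ENNReal.rpow_le_rpow (ofReal_abs_sub_le_tsum_levelVar hp hf hu huv hv hstart hbase) hp0.le
    _ ≤ ENNReal.ofReal (cConst α p) ^ p *
        ∑' j : ℕ, ENNReal.ofReal (((j : ℝ) + 1) ^ (α * p)) * d j ^ p :=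
      tsum_rpow_le_cConst_rpow_mul hp hα d
    _ = chainConst α p *
        ∑' j : ℕ, ENNReal.ofReal (((j : ℝ) + 1) ^ (α * p)) * levelVar f p (L₀ + j) u v := by
      simp only [d, ENNReal.rpow_inv_rpow hp0.ne', mul_left_comm _ ((2 : ℝ≥0∞) ^ (p - 1)),
        ENNReal.tsum_mul_left, chainConst]
      ring
    _ ≤ _ := mul_le_mul_right (tsum_levelVar_le_weightedVar hαp hnh) _

theorem sum_rpow_le_chainConst_mul_Sp (hp : 1 < p) (hα : 1 - 1 / p < α)
    (hf : ContinuousOn f (Set.Icc (-1) 1)) {m : ℕ} {a b : Fin m → ℝ} (ha : ∀ i, -1 ≤ a i)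
    (hab : ∀ i, a i < b i) (hb : ∀ i, b i ≤ 1) (hlen : ∀ i, (b i - a i) * 2 ^ nh < 2)
    (hord : ∀ i j, i < j → b i ≤ a j) :
    ∑ i, ENNReal.ofReal |f (b i) - f (a i)| ^ p ≤ chainConst α p * Sp f nh α p :=
  calc _ ≤ ∑ i, chainConst α p * weightedVar f p α nh (a i) (b i) :=
        sum_le_sum fun i _ => rpow_abs_sub_le_chainConst_mul_weightedVar hp hα hf (ha i) (hab i)
          (hb i) (hlen i)
    _ = chainConst α p * ∑ i, weightedVar f p α nh (a i) (b i) := (mul_sum _ _ _).symm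
    _ ≤ _ := mul_le_mul_right (sum_weightedVar_le_Sp hord) _

theorem three_mul_chainConst_rpow_inv_le (hp : 1 < p) :
    3 * chainConst α p ^ p⁻¹ ≤ ENNReal.ofReal ((4 + 2 ^ ((p - 1) / p)) * cConst α p) := by
  have hp0 : 0 < p := by linarith
  have hc := cConst_nonneg α p
  have h2 : (2 : ℝ) ^ ((p - 1) / p) ≤ 2 := by
    conv_rhs => rw [← Real.rpow_one 2]
    exact Real.rpow_le_rpow_of_exponent_le one_le_two (by rw [div_le_one hp0]; linarith)
  rw [chainConst, ENNReal.mul_rpow_of_nonneg _ _ (inv_nonneg.2 hp0.le),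
    ENNReal.rpow_rpow_inv hp0.ne', ← ENNReal.rpow_mul, ← div_eq_mul_inv,
    ← ENNReal.ofReal_ofNat 2, ENNReal.ofReal_rpow_of_pos two_pos, ← ENNReal.ofReal_ofNat 3,
    ← ENNReal.ofReal_mul (by positivity), ← ENNReal.ofReal_mul (by positivity)]
  exact ENNReal.ofReal_le_ofReal (by nlinarith)

end

end DyadicChaining

open DyadicChaining

section Frame

open Finset

variable {f : ℝ → ℝ} {p α h₁ h₂ : ℝ} {nh : ℕ}

theorem iSup_frame_le (hp : 1 < p) (hα : 1 - 1 / p < α) (hf : ContinuousOn f (Set.Icc (-1) 1))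
    (hh₁ : 0 ≤ h₁) (hh : h₁ < h₂) (hh₂ : h₂ ≤ 1) (hlen : (h₂ - h₁) * 2 ^ nh < 2) :
    ⨆ x : Set.Icc (0 : ℝ) 1, ENNReal.ofReal |f (h₂ - 1 + x) - f (h₁ - 1 + x)| ≤
      (chainConst α p * Sp f nh α p) ^ p⁻¹ := by
  refine iSup_le fun ⟨x, hx0, hx1⟩ => (ENNReal.le_rpow_inv_iff (by linarith)).mpr ?_
  refine (rpow_abs_sub_le_chainConst_mul_weightedVar hp hα hf (by linarith) (by linarith)
    (by linarith) ?_).trans (mul_le_mul_right weightedVar_le_Sp _)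
  rwa [show h₂ - 1 + x - (h₁ - 1 + x) = h₂ - h₁ by ring]

theorem sum_rpow_frame_incr_le (hp : 1 < p) (hα : 1 - 1 / p < α)
    (hf : ContinuousOn f (Set.Icc (-1) 1)) (hh₁ : 0 ≤ h₁) (hh : h₁ < h₂) (hh₂ : h₂ ≤ 1)
    (hlen : (h₂ - h₁) * 2 ^ nh < 2) {n : ℕ} {t : Fin (n + 1) → ℝ} (ht : StrictMono t)
    (h0 : ∀ i, 0 ≤ t i) (h1 : ∀ i, t i ≤ 1) :
    ∑ i : Fin n, ENNReal.ofReal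
      ‖f (h₂ - 1 + t i.succ) - f (h₁ - 1 + t i.succ) -
        (f (h₂ - 1 + t i.castSucc) - f (h₁ - 1 + t i.castSucc))‖ ^ p ≤
      2 ^ p * (chainConst α p * Sp f nh α p) := by
  have hstep (i : Fin n) : t i.castSucc < t i.succ := ht i.castSucc_lt_succ
  have hmono {i j : Fin n} (hij : i < j) : t i.succ ≤ t j.castSucc :=
    ht.monotone (Fin.succ_le_castSucc_iff.mpr hij)
  have hshort {x y : ℝ} (h : y - x ≤ h₂ - h₁) : (y - x) * 2 ^ nh < 2 :=
    (mul_le_mul_of_nonneg_right h (by positivity)).trans_lt hlen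
  set M := chainConst α p * Sp f nh α p
  set a : Fin n → ℝ := fun i => max (h₂ - 1 + t i.castSucc) (h₁ - 1 + t i.succ)
  set b : Fin n → ℝ := fun i => h₂ - 1 + t i.succ
  set a' : Fin n → ℝ := fun i => h₁ - 1 + t i.castSucc
  set b' : Fin n → ℝ := fun i => min (h₂ - 1 + t i.castSucc) (h₁ - 1 + t i.succ)
  have hX : ∑ i, ENNReal.ofReal |f (b i) - f (a i)| ^ p ≤ M :=
    sum_rpow_le_chainConst_mul_Sp hp hα hf
      (fun i => le_max_of_le_left (by linarith [h0 i.castSucc]))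
      (fun i => max_lt (by linarith [hstep i]) (by linarith)) (fun i => by linarith [h1 i.succ])
      (fun i => hshort (by linarith [le_max_right (h₂ - 1 + t i.castSucc) (h₁ - 1 + t i.succ)]))
      (fun i j hij => le_max_of_le_left (by linarith [hmono hij]))
  have hY : ∑ i, ENNReal.ofReal |f (b' i) - f (a' i)| ^ p ≤ M :=
    sum_rpow_le_chainConst_mul_Sp hp hα hf (fun i => by linarith [h0 i.castSucc])
      (fun i => lt_min (by linarith) (by linarith [hstep i]))
      (fun i => min_le_of_left_le (by linarith [h1 i.castSucc]))
      (fun i => hshort (by linarith [min_le_left (h₂ - 1 + t i.castSucc) (h₁ - 1 + t i.succ)]))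
      (fun i j hij => min_le_of_right_le (by linarith [hmono hij]))
  calc _ ≤ ∑ i,
        (ENNReal.ofReal |f (b i) - f (a i)| + ENNReal.ofReal |f (b' i) - f (a' i)|) ^ p := by
        refine sum_le_sum fun i _ => ENNReal.rpow_le_rpow ?_ (by linarith)
        rw [Real.norm_eq_abs, ← ENNReal.ofReal_add (abs_nonneg _) (abs_nonneg _)]
        exact ENNReal.ofReal_le_ofReal (abs_sub_sub_le_max_min f _ _ _ _)
    _ ≤ ∑ i, 2 ^ (p - 1) *
          (ENNReal.ofReal |f (b i) - f (a i)| ^ p + ENNReal.ofReal |f (b' i) - f (a' i)| ^ p) :=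
        sum_le_sum fun i _ => ENNReal.rpow_add_le_mul_rpow_add_rpow _ _ hp.le
    _ ≤ 2 ^ (p - 1) * (M + M) := by
        rw [← mul_sum, sum_add_distrib]; gcongr
    _ = 2 ^ (p - 1) * 2 ^ (1 : ℝ) * M := by rw [ENNReal.rpow_one, ← two_mul, mul_assoc]
    _ = 2 ^ p * M := by
        rw [← ENNReal.rpow_add _ _ two_ne_zero ENNReal.ofNat_ne_top, sub_add_cancel]

theorem pVar_frame_le (hp : 1 < p) (hα : 1 - 1 / p < α) (hf : ContinuousOn f (Set.Icc (-1) 1))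
    (hh₁ : 0 ≤ h₁) (hh : h₁ < h₂) (hh₂ : h₂ ≤ 1) (hlen : (h₂ - h₁) * 2 ^ nh < 2) :
    pVar p (fun x => f (h₂ - 1 + x) - f (h₁ - 1 + x)) ≤
      2 * (chainConst α p * Sp f nh α p) ^ p⁻¹ := by
  have hp0 : 0 < p := by linarith
  simp only [pVar, iSup_le_iff]
  intro n t ht ht0 ht1
  calc _ ≤ (2 ^ p * (chainConst α p * Sp f nh α p)) ^ p⁻¹ :=
        ENNReal.rpow_le_rpow (sum_rpow_frame_incr_le hp hα hf hh₁ hh hh₂ hlen ht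
          (fun i => ht0 ▸ ht.monotone (Fin.zero_le i))
          (fun i => ht1 ▸ ht.monotone (Fin.le_last i))) (by positivity)
    _ = 2 * (chainConst α p * Sp f nh α p) ^ p⁻¹ := by
      rw [ENNReal.mul_rpow_of_nonneg _ _ (by positivity), ENNReal.rpow_rpow_inv hp0.ne']

end Frame

theorem frame_pnorm_bound_general (p α : ℝ) (hp : 1 < p) (hα : 1 - 1/p < α)
    (f : ℝ → ℝ) (hf : ContinuousOn f (Set.Icc (-1) 1))
    (h₁ h₂ : ℝ) (hh₁ : 0 ≤ h₁) (hh : h₁ < h₂) (hh₂ : h₂ ≤ 1)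
    (nh : ℕ) (hn2 : h₂ - h₁ < (2:ℝ) ^ (-(nh:ℤ) + 1)) :
    (⨆ u : Set.Icc (0:ℝ) 1, ENNReal.ofReal |f (h₂ - 1 + u) - f (h₁ - 1 + u)|) +
        pVar p (fun u => f (h₂ - 1 + u) - f (h₁ - 1 + u)) ≤
      ENNReal.ofReal ((4 + 2 ^ ((p - 1) / p)) * cConst α p) * (Sp f nh α p) ^ (1/p) := by
  have hp0 : 0 < p := by linarith
  have hlen : (h₂ - h₁) * 2 ^ nh < 2 :=
    calc _ < (2 : ℝ) ^ (-(nh : ℤ) + 1) * 2 ^ nh := mul_lt_mul_of_pos_right hn2 (by positivity)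
      _ = 2 := by
        rw [zpow_add₀ two_ne_zero, zpow_neg, zpow_natCast, zpow_one]; field_simp
  calc _ ≤ (chainConst α p * Sp f nh α p) ^ p⁻¹ + 2 * (chainConst α p * Sp f nh α p) ^ p⁻¹ :=
        add_le_add (iSup_frame_le hp hα hf hh₁ hh hh₂ hlen) (pVar_frame_le hp hα hf hh₁ hh hh₂ hlen)
    _ = 3 * chainConst α p ^ p⁻¹ * Sp f nh α p ^ (1 / p) := by
        rw [ENNReal.mul_rpow_of_nonneg _ _ (by positivity), one_div]; ring
    _ ≤ _ := by gcongr; exact three_mul_chainConst_rpow_inv_le hp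

/-- `p`-variation norm bound for the frame increments: for `p > 1`, `α > 1 - 1/p`,
`f ∈ C([-1,1])` and `0 ≤ h₁ < h₂ ≤ 1`, with `nh = n(h₂ - h₁)`,
`‖T_{h₂}^f - T_{h₁}^f‖_∞ + V_p(T_{h₂}^f - T_{h₁}^f) ≤ (4 + 2^{(p-1)/p}) c(α,p) S_p(f,h₂-h₁,α)^{1/p}`
in `[0,∞]`. -/
theorem frame_pnorm_bound (p α : ℝ) (hp : 1 < p) (hα : 1 - 1/p < α)
    (f : ℝ → ℝ) (hf : ContinuousOn f (Set.Icc (-1) 1))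
    (h₁ h₂ : ℝ) (hh₁ : 0 ≤ h₁) (hh : h₁ < h₂) (hh₂ : h₂ ≤ 1)
    (nh : ℕ) (hn1 : (2:ℝ) ^ (-(nh:ℤ)) ≤ h₂ - h₁) (hn2 : h₂ - h₁ < (2:ℝ) ^ (-(nh:ℤ) + 1)) :
    (⨆ u : Set.Icc (0:ℝ) 1, ENNReal.ofReal |f (h₂ - 1 + u) - f (h₁ - 1 + u)|) +
        pVar p (fun u => f (h₂ - 1 + u) - f (h₁ - 1 + u)) ≤
      ENNReal.ofReal ((4 + 2 ^ ((p - 1) / p)) * cConst α p) * (Sp f nh α p) ^ (1/p) :=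
  frame_pnorm_bound_general p α hp hα f hf h₁ h₂ hh₁ hh hh₂ nh hn2
end
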